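/- A priori H¹-bound for the regularized periodic problem, uniform in μ and ε (Theorem 2.4, estimate (2.12)): fix ν > 0, γ > 0 and a bounded continuous g : ℝ² → ℝ, and let C_F be a Friedrichs constant for Ω. Then there exists K ≥ 0, depending only on Ω, Φ, C_F, ν, γ, sup|g|, the Lebesgue measure |Ω| and σ(∂Ω), such that the following holds: for every μ > 0, every ε ∈ (0,1], every i ∈ {0,1}, every pair of coefficients A : ℝ×ℝ² → ℝ, C : ℝ×ℝ² → ℝ² that are C¹ on an open set containing ℝ×closure(Ω), 1-periodic in θ, and satisfy 0 ≤ A ≤ γ and ‖C‖ ≤ γ there, and every S that is C¹ in θ, C² in x on an open set containing ℝ×closure(Ω), 1-periodic in θ, and satisfies μS + ∂S/∂θ − (1/εⁱ)∇·((A(θ,·)+ν)∇S(θ,·)) = (1/εⁱ)∇·C(θ,·) pointwise in Ω and ∂S/∂n + S = g pointwise on ∂Ω for every θ, one has ∫₀¹ ∫_Ω ( S(θ,x)² + ‖∇S(θ,x)‖² ) dx dθ ≤ K. -/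

import Mathlib

open MeasureTheory Set Real
open scoped RealInnerProductSpace

noncomputable section

abbrev E2 : Type := EuclideanSpace ℝ (Fin 2)

/-- Divergence of a vector field on the plane. -/
def vdiv (F : E2 → E2) (x : E2) : ℝ := ∑ i, fderiv ℝ F x (EuclideanSpace.single i 1) i

/-- A nonempty bounded open set in the plane with `C¹` boundary described by a defining
function `Φ`. -/
structure C1Domain where
  Ω : Set E2
  Φ : E2 → ℝ
  nonempty : Ω.Nonempty
  bounded : Bornology.IsBounded Ω
  isOpen : IsOpen Ω
  smoothΦ : ContDiff ℝ 1 Φ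
  eq_dom : Ω = {x | Φ x < 0}
  eq_bd : frontier Ω = {x | Φ x = 0}
  grad_ne : ∀ x ∈ frontier Ω, gradient Φ x ≠ 0

/-- Outward unit normal. -/
def nml (D : C1Domain) (x : E2) : E2 := ‖gradient D.Φ x‖⁻¹ • gradient D.Φ x

/-- The divergence theorem holds on the domain. -/
def DivergenceThm (D : C1Domain) : Prop :=
  ∀ F : E2 → E2, (∃ U : Set E2, IsOpen U ∧ closure D.Ω ⊆ U ∧ ContDiffOn ℝ 1 F U) →
    (∫ x in D.Ω, vdiv F x) = ∫ x in frontier D.Ω, ⟪F x, nml D x⟫ ∂μH[1]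

/-- `CF` is a Friedrichs constant for the domain. -/
def IsFriedrichs (D : C1Domain) (CF : ℝ) : Prop :=
  0 < CF ∧ ∀ u : E2 → ℝ, (∃ U : Set E2, IsOpen U ∧ closure D.Ω ⊆ U ∧ ContDiffOn ℝ 1 u U) →
    (∫ x in D.Ω, (u x) ^ 2) ≤
      CF * ((∫ x in D.Ω, ‖gradient u x‖ ^ 2) + ∫ x in frontier D.Ω, (u x) ^ 2 ∂μH[1])

/-- `S(θ,x)` is `C¹` in `θ` and `C²` in `x` on an open set containing `ℝ × closure Ω`,
and is `1`-periodic in `θ`. -/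
def PeriodicReg (D : C1Domain) (S : ℝ → E2 → ℝ) : Prop :=
  (∃ U : Set (ℝ × E2), IsOpen U ∧ ((univ : Set ℝ) ×ˢ closure D.Ω) ⊆ U ∧
    ContDiffOn ℝ 1 (fun p : ℝ × E2 => S p.1 p.2) U ∧
    ∀ θ : ℝ, ContDiffOn ℝ 2 (fun x => S θ x) {x | (θ, x) ∈ U}) ∧
  ∀ θ x, S (θ + 1) x = S θ x

/-!
Testing the equation against `ε^i S(θ,·)`, i.e. applying the divergence theorem to the field
`S ((A + ν) ∇S + C)` and inserting the Robin condition, gives for every `θ`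
`ν/2 (∫_Ω ‖∇S‖² + ∫_∂Ω S²) ≤ energyBound - ε^i ∫_Ω S ∂_θS`:
Young's inequality absorbs the terms in `C` and `g`, and `μ ε^i ∫_Ω S²` is nonnegative.
The Friedrichs inequality upgrades the left side to the full `H¹` norm. Over one period
`∫_Ω S ∂_θS = ½ d/dθ ∫_Ω S²` integrates to zero, so the bound depends on neither `μ` nor `ε`.
-/

lemma le_add_mul_sq_add_inner {F : Type*} [NormedAddCommGroup F] [InnerProductSpace ℝ F]
    {ν γ a : ℝ} (hν : 0 < ν) (ha : 0 ≤ a) {v c : F} (hc : ‖c‖ ≤ γ) :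
    ν / 2 * ‖v‖ ^ 2 - γ ^ 2 / (2 * ν) ≤ (a + ν) * ‖v‖ ^ 2 + ⟪v, c⟫ := by
  have hvc : -(‖v‖ * γ) ≤ ⟪v, c⟫ := by
    have := (abs_real_inner_le_norm v c).trans (mul_le_mul_of_nonneg_left hc (norm_nonneg v))
    linarith [neg_abs_le ⟪v, c⟫]
  have hyoung := two_mul_le_add_mul_sq (a := ‖v‖) (b := γ) hν
  have : ν⁻¹ * γ ^ 2 = 2 * (γ ^ 2 / (2 * ν)) := by field_simp
  nlinarith [mul_nonneg ha (sq_nonneg ‖v‖)]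

lemma mul_add_mul_le_of_abs_le {ν γ M a s t k : ℝ} (hν : 0 < ν) (ha : 0 ≤ a) (haγ : a ≤ γ)
    (hk : |k| ≤ γ) (hts : |t + s| ≤ M) :
    s * ((a + ν) * t + k) ≤ -(ν / 2) * s ^ 2 + ((γ + ν) * M + γ) ^ 2 / (2 * ν) := by
  have hsk : s * k ≤ |s| * γ :=
    (le_abs_self _).trans ((abs_mul s k).trans_le (mul_le_mul_of_nonneg_left hk (abs_nonneg s)))
  have hst : s * (t + s) ≤ |s| * M :=
    (le_abs_self _).trans ((abs_mul _ _).trans_le (mul_le_mul_of_nonneg_left hts (abs_nonneg s)))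
  have hM : 0 ≤ M := (abs_nonneg _).trans hts
  have hyoung := two_mul_le_add_mul_sq (a := |s|) (b := (γ + ν) * M + γ) hν
  have : ν⁻¹ * ((γ + ν) * M + γ) ^ 2 = 2 * (((γ + ν) * M + γ) ^ 2 / (2 * ν)) := by field_simp
  have hlin : s * ((a + ν) * t) ≤ (γ + ν) * M * |s| - ν * s ^ 2 := by
    have h1 : (a + ν) * (s * (t + s)) ≤ (a + ν) * (|s| * M) := by gcongr
    have h2 : (a + ν) * (|s| * M) ≤ (γ + ν) * (|s| * M) := by gcongr
    nlinarith [mul_nonneg ha (sq_nonneg s)]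
  nlinarith [sq_abs s]

section Slices

variable {F : Type*} [NormedAddCommGroup F] [InnerProductSpace ℝ F]

lemma ContDiffOn.slice {G : Type*} [NormedAddCommGroup G] [NormedSpace ℝ G]
    {n : WithTop ℕ∞} {S : ℝ → F → G} {U : Set (ℝ × F)}
    (hS : ContDiffOn ℝ n (fun p : ℝ × F => S p.1 p.2) U) (θ : ℝ) :
    ContDiffOn ℝ n (S θ) {x | (θ, x) ∈ U} :=
  hS.comp (contDiff_const.prodMk contDiff_id).contDiffOn fun _ hx => hx

variable {S : ℝ → F → ℝ} {U : Set (ℝ × F)} {p : ℝ × F}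

lemma hasFDerivAt_slice (hS : DifferentiableAt ℝ (fun q : ℝ × F => S q.1 q.2) p) :
    HasFDerivAt (S p.1)
      ((fderiv ℝ (fun q : ℝ × F => S q.1 q.2) p).comp (ContinuousLinearMap.inr ℝ ℝ F)) p.2 :=
  hS.hasFDerivAt.comp (f := fun y => (p.1, y)) p.2 (hasFDerivAt_prodMk_right p.1 p.2)

lemma hasDerivAt_slice (hS : DifferentiableAt ℝ (fun q : ℝ × F => S q.1 q.2) p) :
    HasDerivAt (fun s => S s p.2) (fderiv ℝ (fun q : ℝ × F => S q.1 q.2) p (1, 0)) p.1 :=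
  (hS.hasFDerivAt.comp (f := fun s => (s, p.2)) p.1
    (hasFDerivAt_prodMk_left (𝕜 := ℝ) p.1 p.2)).hasDerivAt

lemma continuousOn_deriv_slice (hU : IsOpen U)
    (hS : ContDiffOn ℝ 1 (fun q : ℝ × F => S q.1 q.2) U) :
    ContinuousOn (fun q : ℝ × F => deriv (fun s => S s q.2) q.1) U := by
  refine ((hS.continuousOn_fderiv_of_isOpen hU le_rfl).clm_apply
    (continuousOn_const (c := ((1 : ℝ), (0 : F))))).congr fun q hq => ?_
  exact (hasDerivAt_slice ((hS.contDiffAt (hU.mem_nhds hq)).differentiableAt one_ne_zero)).deriv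

variable [CompleteSpace F]

lemma ContDiffOn.gradient_of_isOpen {m n : WithTop ℕ∞} {f : F → ℝ} {V : Set F}
    (hf : ContDiffOn ℝ n f V) (hV : IsOpen V) (hmn : m + 1 ≤ n) :
    ContDiffOn ℝ m (gradient f) V :=
  (InnerProductSpace.toDual ℝ F).symm.contDiff.comp_contDiffOn (hf.fderiv_of_isOpen hV hmn)

lemma continuousOn_gradient_slice (hU : IsOpen U)
    (hS : ContDiffOn ℝ 1 (fun q : ℝ × F => S q.1 q.2) U) :
    ContinuousOn (fun q : ℝ × F => gradient (S q.1) q.2) U := by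
  have hcont : ContinuousOn (fun q => (InnerProductSpace.toDual ℝ F).symm
      ((fderiv ℝ (fun q : ℝ × F => S q.1 q.2) q).comp (ContinuousLinearMap.inr ℝ ℝ F))) U :=
    (LinearIsometryEquiv.continuous _).comp_continuousOn
      ((hS.continuousOn_fderiv_of_isOpen hU le_rfl).clm_comp continuousOn_const)
  refine hcont.congr fun q hq => ?_
  have hd := (hS.contDiffAt (hU.mem_nhds hq)).differentiableAt one_ne_zero
  rw [gradient, (hasFDerivAt_slice hd).fderiv]

end Slices

lemma vdiv_add {F G : E2 → E2} {x : E2} (hF : DifferentiableAt ℝ F x)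
    (hG : DifferentiableAt ℝ G x) :
    vdiv (fun y => F y + G y) x = vdiv F x + vdiv G x := by
  simp [vdiv, fderiv_fun_add hF hG, Finset.sum_add_distrib]

lemma vdiv_smul {f : E2 → ℝ} {F : E2 → E2} {x : E2} (hf : DifferentiableAt ℝ f x)
    (hF : DifferentiableAt ℝ F x) :
    vdiv (fun y => f y • F y) x = ⟪gradient f x, F x⟫ + f x * vdiv F x := by
  have hinner : ⟪gradient f x, F x⟫ = ∑ i, fderiv ℝ f x (EuclideanSpace.single i 1) * F x i := by
    simp only [PiLp.inner_apply, ← inner_gradient_left]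
    simp [mul_comm]
  rw [hinner, vdiv, vdiv, fderiv_fun_smul hf hF, Finset.mul_sum, ← Finset.sum_add_distrib]
  refine Finset.sum_congr rfl fun i _ => ?_
  simp only [add_apply, smul_apply, ContinuousLinearMap.smulRight_apply, PiLp.add_apply,
    PiLp.smul_apply, smul_eq_mul]
  ring

lemma ContDiffOn.continuousOn_vdiv {F : E2 → E2} {V : Set E2} (hF : ContDiffOn ℝ 1 F V)
    (hV : IsOpen V) : ContinuousOn (vdiv F) V :=
  continuousOn_finsetSum _ fun i _ =>
    (PiLp.continuous_apply 2 _ i).comp_continuousOn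
      ((hF.continuousOn_fderiv_of_isOpen hV le_rfl).clm_apply continuousOn_const)

namespace C1Domain

variable (D : C1Domain)

lemma isCompact_frontier : IsCompact (frontier D.Ω) :=
  D.bounded.isCompact_closure.of_isClosed_subset isClosed_frontier frontier_subset_closure

lemma integrableOn_of_continuousOn {V : Set E2} (hΩV : closure D.Ω ⊆ V) {f : E2 → ℝ}
    (hf : ContinuousOn f V) : IntegrableOn f D.Ω :=
  (hf.mono hΩV).integrableOn_of_subset_isCompact D.bounded.isCompact_closure D.isOpen.measurableSet
    subset_closure D.bounded.measure_lt_top.ne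

lemma integrableOn_frontier_of_continuousOn (hfin : μH[1] (frontier D.Ω) < ⊤) {f : E2 → ℝ}
    (hf : ContinuousOn f (frontier D.Ω)) : IntegrableOn f (frontier D.Ω) μH[1] :=
  hf.integrableOn_of_subset_isCompact D.isCompact_frontier isClosed_frontier.measurableSet
    subset_rfl hfin.ne

lemma continuousOn_nml : ContinuousOn (nml D) (frontier D.Ω) := by
  have hgrad : Continuous (gradient D.Φ) :=
    (InnerProductSpace.toDual ℝ E2).symm.continuous.comp (D.smoothΦ.continuous_fderiv one_ne_zero)
  exact (hgrad.norm.continuousOn.inv₀ fun x hx => norm_ne_zero_iff.2 (D.grad_ne x hx)).smul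
    hgrad.continuousOn

lemma norm_nml {x : E2} (hx : x ∈ frontier D.Ω) : ‖nml D x‖ = 1 := by
  rw [nml, norm_smul, norm_inv, norm_norm, inv_mul_cancel₀ (norm_ne_zero_iff.2 (D.grad_ne x hx))]

end C1Domain

namespace IsFriedrichs

variable {D : C1Domain} {CF : ℝ}

/-- Applied to `u = 1`: were `σ(∂Ω)` infinite, its real value would be `0` and the inequality
would force `|Ω| = 0`. -/
lemma hausdorffMeasure_frontier_lt_top (hCF : IsFriedrichs D CF) : μH[1] (frontier D.Ω) < ⊤ := by
  by_contra h
  have h1 := hCF.2 (fun _ => 1) ⟨univ, isOpen_univ, subset_univ _, contDiffOn_const⟩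
  simp only [one_pow, gradient_fun_const, norm_zero, ne_eq, OfNat.ofNat_ne_zero,
    not_false_eq_true, zero_pow, integral_zero, setIntegral_const, smul_eq_mul, mul_one,
    zero_add, measureReal_def, not_lt_top_iff.1 h, ENNReal.toReal_top, mul_zero] at h1
  exact (ENNReal.toReal_pos (D.isOpen.measure_pos volume D.nonempty).ne'
    D.bounded.measure_lt_top.ne).not_ge h1

lemma integral_sq_add_norm_gradient_sq_le (hCF : IsFriedrichs D CF) {u : E2 → ℝ} {V : Set E2}
    (hV : IsOpen V) (hΩV : closure D.Ω ⊆ V) (hu : ContDiffOn ℝ 1 u V) :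
    ∫ x in D.Ω, (u x ^ 2 + ‖gradient u x‖ ^ 2) ≤
      (CF + 1) * ((∫ x in D.Ω, ‖gradient u x‖ ^ 2) + ∫ x in frontier D.Ω, u x ^ 2 ∂μH[1]) := by
  have hgrad := (hu.gradient_of_isOpen hV le_rfl (m := 0)).continuousOn
  have hu_int : IntegrableOn (fun x => u x ^ 2) D.Ω :=
    D.integrableOn_of_continuousOn hΩV (hu.continuousOn.pow 2)
  have hgrad_int : IntegrableOn (fun x => ‖gradient u x‖ ^ 2) D.Ω :=
    D.integrableOn_of_continuousOn hΩV (hgrad.norm.pow 2)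
  rw [integral_add hu_int hgrad_int]
  have hF := hCF.2 u ⟨V, hV, hΩV, hu⟩
  have hgrad_nonneg : 0 ≤ ∫ x in D.Ω, ‖gradient u x‖ ^ 2 :=
    integral_nonneg fun _ => by positivity
  have hbd_nonneg : 0 ≤ ∫ x in frontier D.Ω, u x ^ 2 ∂μH[1] :=
    integral_nonneg fun _ => by positivity
  nlinarith [hCF.1]

end IsFriedrichs

theorem energy_identity (D : C1Domain) (hdiv : DivergenceThm D) {ν η μ : ℝ}
    {s a f : E2 → ℝ} {c : E2 → E2} {V : Set E2} (hV : IsOpen V) (hΩV : closure D.Ω ⊆ V)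
    (hs : ContDiffOn ℝ 2 s V) (ha : ContDiffOn ℝ 1 a V) (hc : ContDiffOn ℝ 1 c V)
    (heq : ∀ x ∈ D.Ω,
      vdiv (fun y => (a y + ν) • gradient s y) x + vdiv c x = η * (μ * s x + f x)) :
    ∫ x in D.Ω, ((a x + ν) * ‖gradient s x‖ ^ 2 + ⟪gradient s x, c x⟫ +
        η * (μ * s x ^ 2 + s x * f x)) =
      ∫ x in frontier D.Ω,
        s x * ((a x + ν) * ⟪gradient s x, nml D x⟫ + ⟪c x, nml D x⟫) ∂μH[1] := by
  have hflow : ContDiffOn ℝ 1 (fun y => (a y + ν) • gradient s y) V :=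
    (ha.add contDiffOn_const).smul (hs.gradient_of_isOpen hV le_rfl)
  have hG : ContDiffOn ℝ 1 (fun y => (a y + ν) • gradient s y + c y) V := hflow.add hc
  have hdiff : ∀ {E : Type} [NormedAddCommGroup E] [NormedSpace ℝ E] {h : E2 → E},
      ContDiffOn ℝ 1 h V → ∀ x ∈ D.Ω, DifferentiableAt ℝ h x := fun hh x hx =>
    (hh.contDiffAt (hV.mem_nhds (hΩV (subset_closure hx)))).differentiableAt one_ne_zero
  have hL : ∀ x ∈ D.Ω, vdiv (fun y => s y • ((a y + ν) • gradient s y + c y)) x =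
      (a x + ν) * ‖gradient s x‖ ^ 2 + ⟪gradient s x, c x⟫ + η * (μ * s x ^ 2 + s x * f x) := by
    intro x hx
    rw [vdiv_smul (hdiff (hs.of_le one_le_two) x hx) (hdiff hG x hx),
      vdiv_add (hdiff hflow x hx) (hdiff hc x hx), heq x hx, inner_add_right,
      real_inner_smul_right, real_inner_self_eq_norm_sq]
    ring
  have hR : ∀ x ∈ frontier D.Ω, ⟪s x • ((a x + ν) • gradient s x + c x), nml D x⟫ =
      s x * ((a x + ν) * ⟪gradient s x, nml D x⟫ + ⟪c x, nml D x⟫) := fun x _ => by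
    rw [real_inner_smul_left, inner_add_left, real_inner_smul_left]
  have hgauss := hdiv (fun y => s y • ((a y + ν) • gradient s y + c y))
    ⟨V, hV, hΩV, (hs.of_le one_le_two).smul hG⟩
  rwa [setIntegral_congr_fun D.isOpen.measurableSet hL,
    setIntegral_congr_fun isClosed_frontier.measurableSet hR] at hgauss

/-- The Young remainders `γ²/(2ν)` of the interior term and `((γ+ν)M+γ)²/(2ν)` of the boundary
term, integrated over `Ω` and `∂Ω`. -/
def energyBound (D : C1Domain) (ν γ M : ℝ) : ℝ :=
  γ ^ 2 / (2 * ν) * volume.real D.Ω +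
    ((γ + ν) * M + γ) ^ 2 / (2 * ν) * (μH[1] : Measure E2).real (frontier D.Ω)

lemma energyBound_nonneg (D : C1Domain) {ν : ℝ} (hν : 0 < ν) (γ M : ℝ) :
    0 ≤ energyBound D ν γ M := by
  unfold energyBound
  have := measureReal_nonneg (μ := volume) (s := D.Ω)
  have := measureReal_nonneg (μ := (μH[1] : Measure E2)) (s := frontier D.Ω)
  positivity

theorem energy_estimate (D : C1Domain) (hdiv : DivergenceThm D)
    (hfin : μH[1] (frontier D.Ω) < ⊤) {ν γ M η μ : ℝ} (hν : 0 < ν) (hη : 0 ≤ η) (hμ : 0 ≤ μ)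
    {s a f : E2 → ℝ} {c : E2 → E2} {V : Set E2} (hV : IsOpen V) (hΩV : closure D.Ω ⊆ V)
    (hs : ContDiffOn ℝ 2 s V) (ha : ContDiffOn ℝ 1 a V) (hc : ContDiffOn ℝ 1 c V)
    (hf : ContinuousOn f V) (ha_bd : ∀ x ∈ closure D.Ω, 0 ≤ a x ∧ a x ≤ γ)
    (hc_bd : ∀ x ∈ closure D.Ω, ‖c x‖ ≤ γ)
    (heq : ∀ x ∈ D.Ω,
      vdiv (fun y => (a y + ν) • gradient s y) x + vdiv c x = η * (μ * s x + f x))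
    (hbc : ∀ x ∈ frontier D.Ω, |⟪gradient s x, nml D x⟫ + s x| ≤ M) :
    ν / 2 * ((∫ x in D.Ω, ‖gradient s x‖ ^ 2) + ∫ x in frontier D.Ω, s x ^ 2 ∂μH[1]) ≤
      energyBound D ν γ M - η * ∫ x in D.Ω, s x * f x := by
  have hidentity := energy_identity D hdiv hV hΩV hs ha hc heq
  have hΓV : frontier D.Ω ⊆ V := frontier_subset_closure.trans hΩV
  have hsc := hs.continuousOn
  have hac := ha.continuousOn
  have hcc := hc.continuousOn
  have hgc := (hs.gradient_of_isOpen hV (m := 0) (by norm_num)).continuousOn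
  have hgrad_int : IntegrableOn (fun x => ‖gradient s x‖ ^ 2) D.Ω :=
    D.integrableOn_of_continuousOn hΩV (hgc.norm.pow 2)
  have hsf_int : IntegrableOn (fun x => s x * f x) D.Ω :=
    D.integrableOn_of_continuousOn hΩV (hsc.mul hf)
  have hgrad_int' : IntegrableOn (fun x => ν / 2 * ‖gradient s x‖ ^ 2 - γ ^ 2 / (2 * ν)) D.Ω :=
    (hgrad_int.const_mul _).sub (integrableOn_const D.bounded.measure_lt_top.ne)
  have hs_int' : IntegrableOn (fun x => -(ν / 2) * s x ^ 2) (frontier D.Ω) μH[1] :=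
    (D.integrableOn_frontier_of_continuousOn hfin ((hsc.mono hΓV).pow 2)).const_mul _
  have hlower : ∫ x in D.Ω, (ν / 2 * ‖gradient s x‖ ^ 2 - γ ^ 2 / (2 * ν) + η * (s x * f x)) ≤
      ∫ x in D.Ω, ((a x + ν) * ‖gradient s x‖ ^ 2 + ⟪gradient s x, c x⟫ +
        η * (μ * s x ^ 2 + s x * f x)) := by
    refine setIntegral_mono_on (hgrad_int'.add (hsf_int.const_mul _))
      (D.integrableOn_of_continuousOn hΩV ((((hac.add continuousOn_const).mul (hgc.norm.pow 2)).add
        (hgc.inner hcc)).add (continuousOn_const.mul ((continuousOn_const.mul (hsc.pow 2)).add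
          (hsc.mul hf))))) D.isOpen.measurableSet fun x hx => ?_
    have := le_add_mul_sq_add_inner hν (ha_bd x (subset_closure hx)).1 (v := gradient s x)
      (hc_bd x (subset_closure hx))
    nlinarith [mul_nonneg (mul_nonneg hη hμ) (sq_nonneg (s x))]
  have hupper : ∫ x in frontier D.Ω,
        s x * ((a x + ν) * ⟪gradient s x, nml D x⟫ + ⟪c x, nml D x⟫) ∂μH[1] ≤
      ∫ x in frontier D.Ω, (-(ν / 2) * s x ^ 2 + ((γ + ν) * M + γ) ^ 2 / (2 * ν)) ∂μH[1] := by
    refine setIntegral_mono_on (D.integrableOn_frontier_of_continuousOn hfin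
      ((hsc.mono hΓV).mul ((((hac.mono hΓV).add continuousOn_const).mul
        ((hgc.mono hΓV).inner D.continuousOn_nml)).add ((hcc.mono hΓV).inner D.continuousOn_nml))))
      (hs_int'.add (integrableOn_const hfin.ne)) isClosed_frontier.measurableSet fun x hx => ?_
    have hx' := frontier_subset_closure hx
    have hcn : |⟪c x, nml D x⟫| ≤ γ := by
      simpa [D.norm_nml hx] using (abs_real_inner_le_norm _ _).trans
        (mul_le_mul_of_nonneg_right (hc_bd x hx') (norm_nonneg (nml D x)))
    exact mul_add_mul_le_of_abs_le hν (ha_bd x hx').1 (ha_bd x hx').2 hcn (hbc x hx)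
  rw [integral_add hgrad_int' (hsf_int.const_mul _), integral_sub (hgrad_int.const_mul _)
    (integrableOn_const D.bounded.measure_lt_top.ne), integral_const_mul, integral_const_mul,
    setIntegral_const, smul_eq_mul] at hlower
  rw [integral_add hs_int' (integrableOn_const hfin.ne), integral_const_mul, setIntegral_const,
    smul_eq_mul] at hupper
  unfold energyBound
  linarith

theorem IsFriedrichs.integral_sq_add_norm_gradient_sq_le_energyBound {D : C1Domain} {CF : ℝ}
    (hCF : IsFriedrichs D CF) (hdiv : DivergenceThm D) {ν γ M η μ : ℝ} (hν : 0 < ν)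
    (hη : 0 ≤ η) (hμ : 0 ≤ μ) {s a f : E2 → ℝ} {c : E2 → E2} {V : Set E2} (hV : IsOpen V)
    (hΩV : closure D.Ω ⊆ V) (hs : ContDiffOn ℝ 2 s V) (ha : ContDiffOn ℝ 1 a V)
    (hc : ContDiffOn ℝ 1 c V) (hf : ContinuousOn f V)
    (ha_bd : ∀ x ∈ closure D.Ω, 0 ≤ a x ∧ a x ≤ γ) (hc_bd : ∀ x ∈ closure D.Ω, ‖c x‖ ≤ γ)
    (heq : ∀ x ∈ D.Ω,
      vdiv (fun y => (a y + ν) • gradient s y) x + vdiv c x = η * (μ * s x + f x))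
    (hbc : ∀ x ∈ frontier D.Ω, |⟪gradient s x, nml D x⟫ + s x| ≤ M) :
    ∫ x in D.Ω, (s x ^ 2 + ‖gradient s x‖ ^ 2) ≤
      2 * (CF + 1) / ν * (energyBound D ν γ M - η * ∫ x in D.Ω, s x * f x) := by
  have henergy := energy_estimate D hdiv hCF.hausdorffMeasure_frontier_lt_top hν hη hμ hV hΩV
    hs ha hc hf ha_bd hc_bd heq hbc
  calc ∫ x in D.Ω, (s x ^ 2 + ‖gradient s x‖ ^ 2)
      ≤ (CF + 1) * ((∫ x in D.Ω, ‖gradient s x‖ ^ 2) + ∫ x in frontier D.Ω, s x ^ 2 ∂μH[1]) :=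
        hCF.integral_sq_add_norm_gradient_sq_le hV hΩV (hs.of_le one_le_two)
    _ = 2 * (CF + 1) / ν *
          (ν / 2 * ((∫ x in D.Ω, ‖gradient s x‖ ^ 2) + ∫ x in frontier D.Ω, s x ^ 2 ∂μH[1])) := by
        field_simp
    _ ≤ _ := mul_le_mul_of_nonneg_left henergy (div_nonneg (by linarith [hCF.1]) hν.le)

section Periodic

variable {Ω : Set E2} {U : Set (ℝ × E2)}

lemma integrable_prod_of_continuousOn (hΩ : Bornology.IsBounded Ω)
    (hΩU : Icc (0 : ℝ) 1 ×ˢ closure Ω ⊆ U) {h : ℝ × E2 → ℝ} (hh : ContinuousOn h U) :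
    Integrable h ((volume.restrict (Ioc (0 : ℝ) 1)).prod (volume.restrict Ω)) := by
  rw [Measure.prod_restrict, ← Measure.volume_eq_prod]
  exact ((hh.mono hΩU).integrableOn_compact (isCompact_Icc.prod hΩ.isCompact_closure)).mono_set
    (prod_mono Ioc_subset_Icc_self subset_closure)

lemma intervalIntegrable_setIntegral_of_continuousOn (hΩ : Bornology.IsBounded Ω)
    (hΩU : Icc (0 : ℝ) 1 ×ˢ closure Ω ⊆ U) {h : ℝ × E2 → ℝ} (hh : ContinuousOn h U) :
    IntervalIntegrable (fun θ => ∫ x in Ω, h (θ, x)) volume 0 1 := by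
  rw [intervalIntegrable_iff_integrableOn_Ioc_of_le zero_le_one]
  exact (integrable_prod_of_continuousOn hΩ hΩU hh).integral_prod_left

lemma integral_setIntegral_mul_deriv_eq_zero (hΩ : Bornology.IsBounded Ω) (hU : IsOpen U)
    (hΩU : Icc (0 : ℝ) 1 ×ˢ closure Ω ⊆ U) {S : ℝ → E2 → ℝ}
    (hS : ContDiffOn ℝ 1 (fun p : ℝ × E2 => S p.1 p.2) U) (hper : ∀ x ∈ Ω, S 1 x = S 0 x) :
    ∫ θ in (0 : ℝ)..1, ∫ x in Ω, S θ x * deriv (fun s => S s x) θ = 0 := by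
  have hcont : ContinuousOn (fun p : ℝ × E2 => S p.1 p.2 * deriv (fun s => S s p.2) p.1) U :=
    hS.continuousOn.mul (continuousOn_deriv_slice hU hS)
  rw [intervalIntegral.integral_of_le zero_le_one,
    integral_integral_swap (f := fun θ x => S θ x * deriv (fun s => S s x) θ)
      (integrable_prod_of_continuousOn hΩ hΩU hcont)]
  refine setIntegral_eq_zero_of_forall_eq_zero fun x hx => ?_
  have hmem : ∀ t ∈ uIcc (0 : ℝ) 1, (t, x) ∈ U := fun t ht =>
    hΩU ⟨by rwa [uIcc_of_le zero_le_one] at ht, subset_closure hx⟩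
  have hderiv : ∀ t ∈ uIcc (0 : ℝ) 1,
      HasDerivAt (fun s => S s x ^ 2 / 2) (S t x * deriv (fun s => S s x) t) t := by
    intro t ht
    have h : HasDerivAt (fun s => S s x)
        (fderiv ℝ (fun q : ℝ × E2 => S q.1 q.2) (t, x) (1, 0)) t :=
      hasDerivAt_slice ((hS.contDiffAt (hU.mem_nhds (hmem t ht))).differentiableAt one_ne_zero)
    refine ((h.fun_pow 2).div_const 2).congr_deriv ?_
    rw [h.deriv]
    ring
  rw [← intervalIntegral.integral_of_le zero_le_one,
    intervalIntegral.integral_eq_sub_of_hasDerivAt hderiv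
      ((hcont.comp (Continuous.prodMk_left x).continuousOn hmem).intervalIntegrable),
    hper x hx, sub_self]

lemma integral_setIntegral_le_of_periodic (hΩ : Bornology.IsBounded Ω) (hU : IsOpen U)
    (hΩU : Icc (0 : ℝ) 1 ×ˢ closure Ω ⊆ U) {S : ℝ → E2 → ℝ}
    (hS : ContDiffOn ℝ 1 (fun p : ℝ × E2 => S p.1 p.2) U) (hper : ∀ x ∈ Ω, S 1 x = S 0 x)
    {Q : ℝ × E2 → ℝ} (hQ : ContinuousOn Q U) {c K η : ℝ}
    (hQ_le : ∀ θ, ∫ x in Ω, Q (θ, x) ≤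
      c * (K - η * ∫ x in Ω, S θ x * deriv (fun s => S s x) θ)) :
    ∫ θ in (0 : ℝ)..1, ∫ x in Ω, Q (θ, x) ≤ c * K := by
  have hdt : IntervalIntegrable (fun θ => ∫ x in Ω, S θ x * deriv (fun s => S s x) θ)
      volume 0 1 := intervalIntegrable_setIntegral_of_continuousOn hΩ hΩU
    (hS.continuousOn.mul (continuousOn_deriv_slice hU hS))
  calc ∫ θ in (0 : ℝ)..1, ∫ x in Ω, Q (θ, x)
      ≤ ∫ θ in (0 : ℝ)..1, c * (K - η * ∫ x in Ω, S θ x * deriv (fun s => S s x) θ) :=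
        intervalIntegral.integral_mono_on zero_le_one
          (intervalIntegrable_setIntegral_of_continuousOn hΩ hΩU hQ)
          ((intervalIntegrable_const.sub (hdt.const_mul _)).const_mul _) fun θ _ => hQ_le θ
    _ = c * K := by
        rw [intervalIntegral.integral_const_mul, intervalIntegral.integral_sub
          intervalIntegrable_const (hdt.const_mul _), intervalIntegral.integral_const_mul,
          integral_setIntegral_mul_deriv_eq_zero hΩ hU hΩU hS hper]
        simp

end Periodic

theorem stmt7_general
    (D : C1Domain) (hdiv : DivergenceThm D)
    (ν γ : ℝ) (hν : 0 < ν)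
    (g : E2 → ℝ) (hgbd : ∃ M : ℝ, ∀ x, |g x| ≤ M)
    (CF : ℝ) (hCF : IsFriedrichs D CF) :
    ∃ K : ℝ, 0 ≤ K ∧
      ∀ (μ : ℝ), 0 < μ →
      ∀ ε ∈ Ioc (0:ℝ) 1, ∀ i : ℕ, i = 0 ∨ i = 1 →
      ∀ (A : ℝ → E2 → ℝ) (C : ℝ → E2 → E2) (UA : Set (ℝ × E2)),
        IsOpen UA → (univ : Set ℝ) ×ˢ closure D.Ω ⊆ UA →
        ContDiffOn ℝ 1 (fun p : ℝ × E2 => A p.1 p.2) UA →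
        ContDiffOn ℝ 1 (fun p : ℝ × E2 => C p.1 p.2) UA →
        (∀ θ x, A (θ + 1) x = A θ x) → (∀ θ x, C (θ + 1) x = C θ x) →
        (∀ p ∈ UA, 0 ≤ A (Prod.fst p) (Prod.snd p) ∧ A (Prod.fst p) (Prod.snd p) ≤ γ) →
        (∀ p ∈ UA, ‖C (Prod.fst p) (Prod.snd p)‖ ≤ γ) →
      ∀ S : ℝ → E2 → ℝ, PeriodicReg D S →
        (∀ θ : ℝ, ∀ x ∈ D.Ω,
          μ * S θ x + deriv (fun s => S s x) θ
              - (1 / ε ^ i) * vdiv (fun y => (A θ y + ν) • gradient (S θ) y) x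
            = (1 / ε ^ i) * vdiv (C θ) x) →
        (∀ θ : ℝ, ∀ x ∈ frontier D.Ω,
          ⟪gradient (S θ) x, nml D x⟫ + S θ x = g x) →
        (∫ θ in (0:ℝ)..1, ∫ x in D.Ω, ((S θ x) ^ 2 + ‖gradient (S θ) x‖ ^ 2)) ≤ K := by
  obtain ⟨M, hM⟩ := hgbd
  refine ⟨2 * (CF + 1) / ν * energyBound D ν γ M,
    mul_nonneg (div_nonneg (by linarith [hCF.1]) hν.le) (energyBound_nonneg D hν γ M), ?_⟩
  intro μ hμ ε hε i _ A C UA hUA hΩUA hA hC _ _ hA_bd hC_bd S ⟨⟨U, hU, hΩU, hS, hSx⟩, hSper⟩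
    hPDE hBC
  have hεi : 0 < ε ^ i := pow_pos hε.1 i
  have hslice : ∀ θ, ∫ x in D.Ω, (S θ x ^ 2 + ‖gradient (S θ) x‖ ^ 2) ≤ 2 * (CF + 1) / ν *
      (energyBound D ν γ M - ε ^ i * ∫ x in D.Ω, S θ x * deriv (fun s => S s x) θ) := by
    intro θ
    have hΩV : closure D.Ω ⊆ {x | (θ, x) ∈ U ∩ UA} := fun x hx =>
      ⟨hΩU ⟨trivial, hx⟩, hΩUA ⟨trivial, hx⟩⟩
    refine hCF.integral_sq_add_norm_gradient_sq_le_energyBound hdiv hν hεi.le hμ.le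
      ((hU.inter hUA).preimage (Continuous.prodMk_right θ)) hΩV
      ((hSx θ).mono fun _ hx => hx.1) ((hA.slice θ).mono fun _ hx => hx.2)
      ((hC.slice θ).mono fun _ hx => hx.2)
      ((continuousOn_deriv_slice hU hS).comp (Continuous.prodMk_right θ).continuousOn
        fun _ hx => hx.1)
      (fun x hx => hA_bd (θ, x) (hΩUA ⟨trivial, hx⟩))
      (fun x hx => hC_bd (θ, x) (hΩUA ⟨trivial, hx⟩))
      (fun x hx => ?_) (fun x hx => hBC θ x hx ▸ hM x)
    have h := hPDE θ x hx
    field_simp at h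
    linarith
  exact integral_setIntegral_le_of_periodic D.bounded hU (fun p hp => hΩU ⟨trivial, hp.2⟩) hS
    (fun x _ => by simpa using hSper 0 x)
    ((hS.continuousOn.pow 2).add ((continuousOn_gradient_slice hU hS).norm.pow 2)) hslice

/-- a priori `H¹` bound for the regularized periodic problem, uniform in
`μ` and `ε` (Theorem 2.4, estimate (2.12)). -/
theorem stmt7
    (D : C1Domain) (hdiv : DivergenceThm D)
    (ν γ : ℝ) (hν : 0 < ν) (hγ : 0 < γ)
    (g : E2 → ℝ) (hg : Continuous g) (hgbd : ∃ M : ℝ, ∀ x, |g x| ≤ M)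
    (CF : ℝ) (hCF : IsFriedrichs D CF) :
    ∃ K : ℝ, 0 ≤ K ∧
      ∀ (μ : ℝ), 0 < μ →
      ∀ ε ∈ Ioc (0:ℝ) 1, ∀ i : ℕ, i = 0 ∨ i = 1 →
      ∀ (A : ℝ → E2 → ℝ) (C : ℝ → E2 → E2) (UA : Set (ℝ × E2)),
        IsOpen UA → (univ : Set ℝ) ×ˢ closure D.Ω ⊆ UA →
        ContDiffOn ℝ 1 (fun p : ℝ × E2 => A p.1 p.2) UA →
        ContDiffOn ℝ 1 (fun p : ℝ × E2 => C p.1 p.2) UA →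
        (∀ θ x, A (θ + 1) x = A θ x) → (∀ θ x, C (θ + 1) x = C θ x) →
        (∀ p ∈ UA, 0 ≤ A (Prod.fst p) (Prod.snd p) ∧ A (Prod.fst p) (Prod.snd p) ≤ γ) →
        (∀ p ∈ UA, ‖C (Prod.fst p) (Prod.snd p)‖ ≤ γ) →
      ∀ S : ℝ → E2 → ℝ, PeriodicReg D S →
        (∀ θ : ℝ, ∀ x ∈ D.Ω,
          μ * S θ x + deriv (fun s => S s x) θ
              - (1 / ε ^ i) * vdiv (fun y => (A θ y + ν) • gradient (S θ) y) x
            = (1 / ε ^ i) * vdiv (C θ) x) →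
        (∀ θ : ℝ, ∀ x ∈ frontier D.Ω,
          ⟪gradient (S θ) x, nml D x⟫ + S θ x = g x) →
        (∫ θ in (0:ℝ)..1, ∫ x in D.Ω, ((S θ x) ^ 2 + ‖gradient (S θ) x‖ ^ 2)) ≤ K :=
  stmt7_general D hdiv ν γ hν g hgbd CF hCF

end
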